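/- Let L : H → G be bounded linear, bounded below, with ‖L‖ ≤ 1, let γ > 0, and let A, B be strictly positive on G. Then d_H(L ⊙_γ A, L ⊙_γ B) ≤ d_G(A, B), where L ⊙_γ B = (L ⊡_{1/γ} B⁻¹)⁻¹ is the resolvent composition, L ⊡_μ C = L* ∘ (C⁻¹ + μ(Id_G − L L*))⁻¹ ∘ L, and d is the Thompson metric. -/

import Mathlib

open ContinuousLinearMap MeasureTheory

noncomputable section

variable {E : Type*} [NormedAddCommGroup E] [InnerProductSpace ℝ E] [CompleteSpace E]
variable {H G : Type*} [NormedAddCommGroup H] [InnerProductSpace ℝ H] [CompleteSpace H]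
  [NormedAddCommGroup G] [InnerProductSpace ℝ G] [CompleteSpace G]

/-- Löwner partial order: `A ≼ B` iff `B - A` is a positive operator. -/
def Loewner (A B : E →L[ℝ] E) : Prop := (B - A).IsPositive

/-- Strictly positive operators: `α • Id ≼ A` for some `α > 0`. -/
def StrictlyPos (A : E →L[ℝ] E) : Prop :=
  IsSelfAdjoint A ∧ ∃ α : ℝ, 0 < α ∧ Loewner (α • (1 : E →L[ℝ] E)) A

/-- Bounded below linear operator. -/
def BoundedBelow (L : H →L[ℝ] G) : Prop := ∃ β : ℝ, 0 < β ∧ ∀ x : H, β * ‖x‖ ≤ ‖L x‖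

/-- Resolvent cocomposition `L ⊡_γ B = L* ∘ (B⁻¹ + γ(Id − L L*))⁻¹ ∘ L`. -/
def rcc (L : H →L[ℝ] G) (γ : ℝ) (B : G →L[ℝ] G) : H →L[ℝ] H :=
  (adjoint L) ∘L (Ring.inverse (Ring.inverse B + γ • ((1 : G →L[ℝ] G) - L ∘L adjoint L))) ∘L L

/-- Resolvent composition `L ⊙_γ B = (L ⊡_{1/γ} B⁻¹)⁻¹`. -/
def rc (L : H →L[ℝ] G) (γ : ℝ) (B : G →L[ℝ] G) : H →L[ℝ] H :=
  Ring.inverse (rcc L (1/γ) (Ring.inverse B))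

/-- Parallel composition `L* ▸ B = (L* ∘ B⁻¹ ∘ L)⁻¹`. -/
def parallelComp (L : H →L[ℝ] G) (B : G →L[ℝ] G) : H →L[ℝ] H :=
  Ring.inverse ((adjoint L) ∘L (Ring.inverse B) ∘L L)

/-- `g(A,B) = inf {λ > 0 : A ≼ λ B}`. -/
def gThomp (A B : E →L[ℝ] E) : ℝ := sInf {l : ℝ | 0 < l ∧ Loewner A (l • B)}

/-- Thompson metric. -/
def dThomp (A B : E →L[ℝ] E) : ℝ := Real.log (max (gThomp A B) (gThomp B A))

/-- The (unique) positive square root of a positive operator. -/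
def opSqrt (A : E →L[ℝ] E) : E →L[ℝ] E :=
  letI := Classical.propDecidable
  if h : ∃ S : E →L[ℝ] E, S.IsPositive ∧ S * S = A then h.choose else 0

/-- Real power `A^t` of a strictly positive operator, `t ∈ (0,1)`, via the
Balakrishnan integral formula `A^t = (sin (π t)/π) ∫₀^∞ s^{t-1} A (A + s)⁻¹ ds`. -/
def opRpow (A : E →L[ℝ] E) (t : ℝ) : E →L[ℝ] E :=
  (Real.sin (Real.pi * t) / Real.pi) •
    ∫ s in Set.Ioi (0 : ℝ), s ^ (t - 1) • (A * Ring.inverse (A + s • (1 : E →L[ℝ] E)))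

/-- Geometric mean `A # B = A^{1/2} (A^{-1/2} B A^{-1/2})^{1/2} A^{1/2}`. -/
def geomMean (A B : E →L[ℝ] E) : E →L[ℝ] E :=
  opSqrt A * opSqrt (Ring.inverse (opSqrt A) * B * Ring.inverse (opSqrt A)) * opSqrt A

/-- `t`-weighted geometric mean `A #_t B = A^{1/2} (A^{-1/2} B A^{-1/2})^t A^{1/2}`. -/
def wGeomMean (t : ℝ) (A B : E →L[ℝ] E) : E →L[ℝ] E :=
  opSqrt A * opRpow (Ring.inverse (opSqrt A) * B * Ring.inverse (opSqrt A)) t * opSqrt A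

/-!
Put `M = γ⁻¹ (Id − L L*)`, which is positive because `‖L‖ ≤ 1`. Then `L ⊙_γ A` is the parallel
composition `L* ▸ (A + M) = (L* (A + M)⁻¹ L)⁻¹`. Inversion reverses the Löwner order on strictly
positive operators and conjugation by `L` preserves it, so `L* ▸ ·` is monotone and positively
homogeneous. As `A ≼ λ B` with `λ ≥ 1` gives `A + M ≼ λ (B + M)`, it follows that
`L ⊙_γ A ≼ λ (L ⊙_γ B)`, which bounds both one-sided Thompson gauges of the images by those of
`A` and `B` (truncated at `1`).
-/

open scoped InnerProductSpace Ring

theorem Ring.inverse_smul {k R : Type*} [Field k] [Ring R] [Algebra k R] {c : k} (hc : c ≠ 0)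
    (a : R) : (c • a)⁻¹ʳ = c⁻¹ • a⁻¹ʳ := by
  by_cases ha : IsUnit a
  · have hca : IsUnit (c • a) := ha.smul (Units.mk0 c hc)
    simpa using (Ring.inverse_mul_eq_iff_eq_mul (c • a) 1 (c⁻¹ • a⁻¹ʳ) hca).2
      (by simp [hc, Ring.mul_inverse_cancel _ ha])
  · have hca : ¬IsUnit (c • a) := (isUnit_smul_iff (Units.mk0 c hc) a).not.2 ha
    rw [Ring.inverse_non_unit _ ha, Ring.inverse_non_unit _ hca, smul_zero]

namespace ContinuousLinearMap

theorem apply_ringInverse_apply {R M : Type*} [Semiring R] [TopologicalSpace M] [AddCommMonoid M]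
    [Module R M] {A : M →L[R] M} (hu : IsUnit A) (x : M) : A (A⁻¹ʳ x) = x :=
  DFunLike.congr_fun (Ring.mul_inverse_cancel A hu) x

theorem IsPositive.two_inner_sub_le_inner_ringInverse {V : Type*} [NormedAddCommGroup V]
    [InnerProductSpace ℝ V] {A : V →L[ℝ] V} (hA : A.IsPositive) (hu : IsUnit A) (x y : V) :
    2 * ⟪x, y⟫_ℝ - ⟪A y, y⟫_ℝ ≤ ⟪A⁻¹ʳ x, x⟫_ℝ := by
  have h := hA.inner_nonneg_left (y - A⁻¹ʳ x)
  rw [map_sub, apply_ringInverse_apply hu, inner_sub_left, inner_sub_right, inner_sub_right,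
    hA.inner_left_eq_inner_right y (A⁻¹ʳ x), apply_ringInverse_apply hu] at h
  linarith [real_inner_comm x y, real_inner_comm x (A⁻¹ʳ x)]

theorem ringInverse_le_ringInverse {A B : E →L[ℝ] E} (hA : A.IsPositive) (hAu : IsUnit A)
    (hBu : IsUnit B) (h : A ≤ B) : B⁻¹ʳ ≤ A⁻¹ʳ := by
  have hB : B.IsPositive := by simpa using hA.add h
  refine (isPositive_iff' _).2 ⟨hA.isSelfAdjoint.ringInverse.sub hB.isSelfAdjoint.ringInverse,
    fun x => ?_⟩
  have hle := ((isPositive_iff' _).1 h).2 (B⁻¹ʳ x)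
  have := hA.two_inner_sub_le_inner_ringInverse hAu x (B⁻¹ʳ x)
  rw [sub_apply, inner_sub_left, apply_ringInverse_apply hBu] at hle
  rw [sub_apply, inner_sub_left]
  linarith [real_inner_comm x (A⁻¹ʳ x), real_inner_comm x (B⁻¹ʳ x)]

theorem le_iff_forall_inner_le {A B : E →L[ℝ] E} (hA : IsSelfAdjoint A) (hB : IsSelfAdjoint B) :
    A ≤ B ↔ ∀ x, ⟪A x, x⟫_ℝ ≤ ⟪B x, x⟫_ℝ := by
  simp [le_def, isPositive_iff', hB.sub hA, inner_sub_left]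

theorem smul_one_le_iff {A : E →L[ℝ] E} (hA : IsSelfAdjoint A) {c : ℝ} :
    c • 1 ≤ A ↔ ∀ x, c * ‖x‖ ^ 2 ≤ ⟪A x, x⟫_ℝ := by
  simp [le_iff_forall_inner_le ((IsSelfAdjoint.all c).smul (.one _)) hA, real_inner_smul_left]

theorem le_smul_one_iff {A : E →L[ℝ] E} (hA : IsSelfAdjoint A) {c : ℝ} :
    A ≤ c • 1 ↔ ∀ x, ⟪A x, x⟫_ℝ ≤ c * ‖x‖ ^ 2 := by
  simp [le_iff_forall_inner_le hA ((IsSelfAdjoint.all c).smul (.one _)), real_inner_smul_left]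

theorem _root_.IsSelfAdjoint.le_smul_one {A : E →L[ℝ] E} (hA : IsSelfAdjoint A) {c : ℝ}
    (hc : ‖A‖ ≤ c) : A ≤ c • 1 := by
  refine (le_smul_one_iff hA).2 fun x => ?_
  calc ⟪A x, x⟫_ℝ ≤ ‖A x‖ * ‖x‖ := real_inner_le_norm _ _
    _ ≤ ‖A‖ * ‖x‖ * ‖x‖ := by gcongr; exact A.le_opNorm x
    _ ≤ c * ‖x‖ ^ 2 := by rw [mul_assoc, ← sq]; gcongr

end ContinuousLinearMap

theorem strictlyPos_iff {A : E →L[ℝ] E} :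
    StrictlyPos A ↔ IsSelfAdjoint A ∧ ∃ α, 0 < α ∧ ∀ x, α * ‖x‖ ^ 2 ≤ ⟪A x, x⟫_ℝ :=
  and_congr_right fun hA => exists_congr fun _ => and_congr_right fun _ => smul_one_le_iff hA

namespace StrictlyPos

variable {A B : E →L[ℝ] E}

theorem isPositive (hA : StrictlyPos A) : A.IsPositive := by
  obtain ⟨-, α, hα, hαA⟩ := hA
  exact (nonneg_iff_isPositive A).1 <| le_trans ((nonneg_iff_isPositive _).2 <|
    isPositive_one.smul_of_nonneg hα.le) hαA

theorem isUnit (hA : StrictlyPos A) : IsUnit A := by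
  obtain ⟨-, α, hα, hq⟩ := strictlyPos_iff.1 hA
  refine isUnit_of_forall_le_norm_inner_map A (c := ⟨α, hα.le⟩) hα fun x => ?_
  calc ‖x‖ ^ 2 * α ≤ ⟪A x, x⟫_ℝ := by linarith [hq x]
    _ ≤ ‖⟪A x, x⟫_ℝ‖ := Real.le_norm_self _

theorem add_isPositive (hA : StrictlyPos A) {P : E →L[ℝ] E} (hP : P.IsPositive) :
    StrictlyPos (A + P) := by
  obtain ⟨hsa, α, hα, hαA⟩ := hA
  refine ⟨hsa.add hP.isSelfAdjoint, α, hα, le_trans hαA ((le_def A (A + P)).2 ?_)⟩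
  simpa using hP

theorem smul (hA : StrictlyPos A) {c : ℝ} (hc : 0 < c) : StrictlyPos (c • A) := by
  obtain ⟨hsa, α, hα, hαA⟩ := hA
  refine ⟨(IsSelfAdjoint.all c).smul hsa, c * α, by positivity, ?_⟩
  simpa [Loewner, smul_smul, smul_sub] using hαA.smul_of_nonneg hc.le

theorem ringInverse (hA : StrictlyPos A) : StrictlyPos A⁻¹ʳ := by
  have hc : 0 < ‖A‖ + 1 := by positivity
  have hle : (‖A‖ + 1)⁻¹ • (1 : E →L[ℝ] E) ≤ A⁻¹ʳ := by
    have := ringInverse_le_ringInverse hA.isPositive hA.isUnit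
      (isUnit_one.smul (Units.mk0 _ hc.ne')) (hA.1.le_smul_one (le_add_of_nonneg_right zero_le_one))
    simpa [Ring.inverse_smul hc.ne'] using this
  exact ⟨hA.1.ringInverse, (‖A‖ + 1)⁻¹, inv_pos.2 hc, hle⟩

theorem adjoint_conj (hA : StrictlyPos A) {L : H →L[ℝ] E} (hL : BoundedBelow L) :
    StrictlyPos (adjoint L ∘L A ∘L L) := by
  obtain ⟨β, hβ, hLβ⟩ := hL
  obtain ⟨-, α, hα, hq⟩ := strictlyPos_iff.1 hA
  refine strictlyPos_iff.2 ⟨(hA.isPositive.adjoint_conj L).isSelfAdjoint, α * β ^ 2,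
    by positivity, fun x => ?_⟩
  rw [comp_apply, adjoint_inner_left, comp_apply]
  calc α * β ^ 2 * ‖x‖ ^ 2 = α * (β * ‖x‖) ^ 2 := by ring
    _ ≤ α * ‖L x‖ ^ 2 := by gcongr; exact hLβ x
    _ ≤ _ := hq (L x)

end StrictlyPos

theorem isPositive_one_sub_comp_adjoint {L : H →L[ℝ] G} (hL : ‖L‖ ≤ 1) :
    (1 - L ∘L adjoint L).IsPositive := by
  have hnorm : ‖L ∘L adjoint L‖ ≤ 1 := calc
    ‖L ∘L adjoint L‖ ≤ ‖L‖ * ‖adjoint L‖ := opNorm_comp_le _ _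
    _ = ‖L‖ * ‖L‖ := by rw [LinearIsometryEquiv.norm_map]
    _ ≤ 1 := by nlinarith [norm_nonneg L]
  simpa [le_def] using (isPositive_self_comp_adjoint L).isSelfAdjoint.le_smul_one hnorm

theorem adjoint_conj_le_adjoint_conj {A B : G →L[ℝ] G} (h : A ≤ B) (L : H →L[ℝ] G) :
    adjoint L ∘L A ∘L L ≤ adjoint L ∘L B ∘L L := by
  simpa [le_def, sub_comp, comp_sub] using h.adjoint_conj L

theorem parallelComp_smul (L : H →L[ℝ] G) {c : ℝ} (hc : c ≠ 0) (B : G →L[ℝ] G) :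
    parallelComp L (c • B) = c • parallelComp L B := by
  simp [parallelComp, Ring.inverse_smul hc, Ring.inverse_smul (inv_ne_zero hc)]

theorem parallelComp_mono {L : H →L[ℝ] G} (hL : BoundedBelow L) {A B : G →L[ℝ] G}
    (hA : StrictlyPos A) (hB : StrictlyPos B) (h : A ≤ B) :
    parallelComp L A ≤ parallelComp L B :=
  ringInverse_le_ringInverse (hB.ringInverse.adjoint_conj hL).isPositive
    (hB.ringInverse.adjoint_conj hL).isUnit (hA.ringInverse.adjoint_conj hL).isUnit
    (adjoint_conj_le_adjoint_conj
      (ringInverse_le_ringInverse hA.isPositive hA.isUnit hB.isUnit h) L)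

theorem rc_eq_parallelComp (L : H →L[ℝ] G) (γ : ℝ) {A : G →L[ℝ] G} (hA : IsUnit A) :
    rc L γ A = parallelComp L (A + (1 / γ) • (1 - L ∘L adjoint L)) := by
  rw [rc, rcc, parallelComp, Ring.inverse_inverse hA]

theorem rc_le_smul_rc {L : H →L[ℝ] G} (hL : BoundedBelow L) (hL1 : ‖L‖ ≤ 1) {γ : ℝ}
    (hγ : 0 < γ) {A B : G →L[ℝ] G} (hA : StrictlyPos A) (hB : StrictlyPos B) {l : ℝ}
    (hl : 1 ≤ l) (h : A ≤ l • B) : rc L γ A ≤ l • rc L γ B := by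
  set M := (1 / γ) • (1 - L ∘L adjoint L)
  have hM : M.IsPositive :=
    (isPositive_one_sub_comp_adjoint hL1).smul_of_nonneg (by positivity)
  have hle : A + M ≤ l • (B + M) := by
    rw [le_def, show l • (B + M) - (A + M) = (l • B - A) + (l - 1) • M by module]
    exact h.add (hM.smul_of_nonneg (by linarith))
  rw [rc_eq_parallelComp L γ hA.isUnit, rc_eq_parallelComp L γ hB.isUnit,
    ← parallelComp_smul L (by positivity)]
  exact parallelComp_mono hL (hA.add_isPositive hM)
    ((hB.add_isPositive hM).smul (by positivity)) hle

section Thompson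

variable {V : Type*} [NormedAddCommGroup V] [InnerProductSpace ℝ V]

theorem gThomp_nonneg (A B : V →L[ℝ] V) : 0 ≤ gThomp A B :=
  Real.sInf_nonneg fun _ hl => hl.1.le

theorem gThomp_le {A B : V →L[ℝ] V} {l : ℝ} (hl : 0 < l) (h : A ≤ l • B) : gThomp A B ≤ l :=
  csInf_le ⟨0, fun _ hx => hx.1.le⟩ ⟨hl, h⟩

theorem gThomp_of_subsingleton [Subsingleton V] (A B : V →L[ℝ] V) : gThomp A B = 0 := by
  have hset : {l : ℝ | 0 < l ∧ Loewner A (l • B)} = Set.Ioi 0 := by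
    ext l
    simp [Loewner, Subsingleton.elim (l • B - A) 0]
  rw [gThomp, hset, csInf_Ioi]

theorem StrictlyPos.exists_le_smul {A B : E →L[ℝ] E} (hA : IsSelfAdjoint A)
    (hB : StrictlyPos B) : ∃ l : ℝ, 0 < l ∧ A ≤ l • B := by
  obtain ⟨-, β, hβ, hβB⟩ := hB
  refine ⟨(‖A‖ + 1) / β, by positivity,
    (hA.le_smul_one (le_add_of_nonneg_right zero_le_one)).trans ?_⟩
  have := hβB.smul_of_nonneg (c := (‖A‖ + 1) / β) (by positivity)
  rwa [smul_sub, smul_smul, div_mul_cancel₀ _ hβ.ne'] at this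

theorem one_le_max_gThomp [Nontrivial E] {A B : E →L[ℝ] E} (hA : StrictlyPos A)
    (hB : StrictlyPos B) : 1 ≤ max (gThomp A B) (gThomp B A) := by
  by_contra! hlt
  obtain ⟨l, ⟨hl, hAB⟩, hl1⟩ :=
    exists_lt_of_csInf_lt (hB.exists_le_smul hA.1) (max_lt_iff.1 hlt).1
  obtain ⟨k, ⟨hk, hBA⟩, hk1⟩ :=
    exists_lt_of_csInf_lt (hA.exists_le_smul hB.1) (max_lt_iff.1 hlt).2
  obtain ⟨x, hx⟩ := exists_ne (0 : E)
  obtain ⟨-, α, hα, hq⟩ := strictlyPos_iff.1 hA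
  have hAx : 0 < ⟪A x, x⟫_ℝ := (by positivity : 0 < α * ‖x‖ ^ 2).trans_le (hq x)
  have h1 := (le_iff_forall_inner_le hA.1 ((IsSelfAdjoint.all l).smul hB.1)).1 hAB x
  have h2 := (le_iff_forall_inner_le hB.1 ((IsSelfAdjoint.all k).smul hA.1)).1 hBA x
  simp only [smul_apply, real_inner_smul_left] at h1 h2
  nlinarith [mul_le_mul_of_nonneg_left h2 hl.le, mul_lt_mul'' hl1 hk1 hl.le hk.le]

theorem gThomp_le_max_one {A B : G →L[ℝ] G} {A' B' : V →L[ℝ] V} (hA : IsSelfAdjoint A)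
    (hB : StrictlyPos B) (h : ∀ l : ℝ, 1 ≤ l → A ≤ l • B → A' ≤ l • B') :
    gThomp A' B' ≤ max (gThomp A B) 1 := by
  rcases le_or_gt (gThomp A' B') 1 with h1 | h1
  · exact le_max_of_le_right h1
  refine le_max_of_le_left (le_csInf (hB.exists_le_smul hA) ?_)
  rintro l ⟨hl, hAB⟩
  have hAB' : A ≤ max l 1 • B := by
    refine le_trans hAB ((le_def _ _).2 ?_)
    rw [← sub_smul]
    exact hB.isPositive.smul_of_nonneg (sub_nonneg.2 (le_max_left l 1))
  have := gThomp_le (by positivity) (h _ (le_max_right l 1) hAB')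
  exact (le_max_iff.1 this).resolve_right h1.not_ge

theorem dThomp_le_of_gThomp_le_max_one {A B : G →L[ℝ] G} {A' B' : V →L[ℝ] V}
    (hA : StrictlyPos A) (hB : StrictlyPos B) (h₁ : gThomp A' B' ≤ max (gThomp A B) 1)
    (h₂ : gThomp B' A' ≤ max (gThomp B A) 1) : dThomp A' B' ≤ dThomp A B := by
  have hle : max (gThomp A' B') (gThomp B' A') ≤ max (max (gThomp A B) (gThomp B A)) 1 :=
    max_le (h₁.trans (by gcongr; exact le_max_left _ _))
      (h₂.trans (by gcongr; exact le_max_right _ _))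
  have h0 : 0 ≤ max (gThomp A' B') (gThomp B' A') := le_max_of_le_left (gThomp_nonneg _ _)
  rcases subsingleton_or_nontrivial G with hG | hG
  -- On the zero space every gauge is `sInf (Ioi 0) = 0`, so `dThomp A B = log 0 = 0`.
  · simp only [gThomp_of_subsingleton, max_self, zero_le_one, max_eq_right] at hle
    simpa [dThomp, gThomp_of_subsingleton] using Real.log_nonpos h0 hle
  · have h1 := one_le_max_gThomp hA hB
    rw [max_eq_left h1] at hle
    rcases h0.eq_or_lt with hzero | hpos
    · rw [dThomp, ← hzero, Real.log_zero]
      exact Real.log_nonneg h1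
    · exact Real.log_le_log hpos hle

end Thompson

theorem rc_thompson_nonexpansive (L : H →L[ℝ] G) (hL : BoundedBelow L)
    (hL1 : ‖L‖ ≤ 1) (γ : ℝ) (hγ : 0 < γ)
    (A B : G →L[ℝ] G) (hA : StrictlyPos A) (hB : StrictlyPos B) :
    dThomp (rc L γ A) (rc L γ B) ≤ dThomp A B :=
  dThomp_le_of_gThomp_le_max_one hA hB
    (gThomp_le_max_one hA.1 hB fun _ hl h => rc_le_smul_rc hL hL1 hγ hA hB hl h)
    (gThomp_le_max_one hB.1 hA fun _ hl h => rc_le_smul_rc hL hL1 hγ hB hA hl h)
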